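/- Let n ≥ 4 and let h(c) = −c³ − ((n²−10n)/3)c² − (2n²+n)c + (4n³−5n²+4n)/3, where c ≥ 3 is the length of a cycle with c ≤ n. Then h(2√n) < 0 for all sufficiently large n, while h(2√n − 3) > 0 for all sufficiently large n. -/
import Mathlib


/-- The cubic `h(c) = −c³ − ((n²−10n)/3)c² − (2n²+n)c + (4n³−5n²+4n)/3`. -/
noncomputable def hCubic (n c : ℝ) : ℝ :=
  -c ^ 3 - ((n ^ 2 - 10 * n) / 3) * c ^ 2 - (2 * n ^ 2 + n) * c
    + (4 * n ^ 3 - 5 * n ^ 2 + 4 * n) / 3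

theorem hCubic_signs_for_large_n :
    ∃ N : ℝ, ∀ n : ℝ, N ≤ n →
      hCubic n (2 * Real.sqrt n) < 0 ∧ hCubic n (2 * Real.sqrt n - 3) > 0 := by
  refine ⟨16, fun n hn => ?_⟩
  have hn0 : (0:ℝ) ≤ n := by linarith
  set s := Real.sqrt n with hs_def
  have hsq : s ^ 2 = n := Real.sq_sqrt hn0
  have hs : 4 ≤ s := by
    have h1 : Real.sqrt 16 ≤ Real.sqrt n := Real.sqrt_le_sqrt hn
    have h2 : Real.sqrt 16 = 4 := by
      rw [show (16:ℝ) = 4 ^ 2 by norm_num, Real.sqrt_sq (by norm_num)]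
    linarith
  constructor <;> simp only [hCubic, ← hsq] <;>
    nlinarith [sq_nonneg s, sq_nonneg (s - 4), pow_pos (by linarith : (0:ℝ) < s) 3,
      pow_pos (by linarith : (0:ℝ) < s) 2, mul_pos (pow_pos (by linarith : (0:ℝ) < s) 2)
        (pow_pos (by linarith : (0:ℝ) < s) 3)]
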